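/- Let v₀ > 0, γ ≥ 0, and let s : [0,∞) → ℝ satisfy |s(t) − s(τ)| ≥ v₀(t−τ) for 0 ≤ τ ≤ t, and let v : [0,∞) → ℝ be continuous with |v(τ)| ≤ v₁ for all τ. Then for all t ≥ 0, |∫_0^t exp(−(s(t)−s(τ))²/(4(t−τ)))/(2√(π(t−τ))) · e^{−γ(t−τ)} v(τ) dτ| ≤ v₁/v₀. -/

import Mathlib

/-!
Since the front moves with speed at least `v₀`, the Gaussian factor at lag `u = t - τ` is at most
`exp (-v₀² u / 4)`, and the damping factor and `|v|` are at most `1` and `v₁`. The integrand is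
thus dominated by `v₁` times `exp (-v₀² u / 4) / (2 √(π u))`, whose integral over `(0, ∞)` is
`1 / v₀`: a Gamma integral at `1/2`.
-/

open Real MeasureTheory Set

theorem abs_intervalIntegral_le_integral_Ioi_of_le_comp_sub {f g : ℝ → ℝ} {t : ℝ} (ht : 0 ≤ t)
    (hg : IntegrableOn g (Ioi 0)) (hg_nonneg : ∀ u, 0 < u → 0 ≤ g u)
    (hfg : ∀ τ ∈ Ioo 0 t, |f τ| ≤ g (t - τ)) :
    |∫ τ in (0:ℝ)..t, f τ| ≤ ∫ u in Ioi 0, g u := by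
  rw [← Real.norm_eq_abs]
  have hg_interval : IntervalIntegrable g volume 0 t :=
    (intervalIntegrable_iff_integrableOn_Ioc_of_le ht).2 (hg.mono_set Ioc_subset_Ioi_self)
  calc ‖∫ τ in (0:ℝ)..t, f τ‖ ≤ ∫ τ in (0:ℝ)..t, g (t - τ) := by
        refine intervalIntegral.norm_integral_le_of_norm_le ht ?_ ?_
        · filter_upwards [Measure.ae_ne volume t] with τ hτt hτ
          exact hfg τ ⟨hτ.1, lt_of_le_of_ne hτ.2 hτt⟩
        · simpa using (hg_interval.comp_sub_left t).symm
    _ = ∫ u in (0:ℝ)..t, g u := by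
        rw [intervalIntegral.integral_comp_sub_left g t, sub_self, sub_zero]
    _ ≤ ∫ u in Ioi 0, g u := by
        rw [intervalIntegral.integral_of_le ht]
        exact setIntegral_mono_set hg ((ae_restrict_iff' measurableSet_Ioi).2
          (ae_of_all _ hg_nonneg)) Ioc_subset_Ioi_self.eventuallyLE

theorem rpow_neg_one_half_eq_inv_sqrt {u : ℝ} (hu : 0 ≤ u) : u ^ (-(1 / 2) : ℝ) = (√u)⁻¹ := by
  rw [rpow_neg hu, sqrt_eq_rpow]

theorem integrableOn_exp_neg_mul_div_sqrt {b : ℝ} (hb : 0 < b) :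
    IntegrableOn (fun u ↦ exp (-(b * u)) / √u) (Ioi 0) := by
  refine (integrableOn_rpow_mul_exp_neg_mul_rpow (s := -(1 / 2)) (by norm_num) one_pos hb).congr_fun
    (fun u hu ↦ ?_) measurableSet_Ioi
  dsimp only
  rw [rpow_neg_one_half_eq_inv_sqrt (le_of_lt hu), rpow_one, div_eq_inv_mul, neg_mul]

theorem integral_exp_neg_mul_div_sqrt {b : ℝ} (hb : 0 < b) :
    ∫ u in Ioi 0, exp (-(b * u)) / √u = √π / √b := by
  have h := integral_rpow_mul_exp_neg_mul_Ioi one_half_pos hb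
  rw [Gamma_one_half_eq, show (1 / 2 : ℝ) - 1 = -(1 / 2) by norm_num, ← sqrt_eq_rpow,
    sqrt_div' _ hb.le, sqrt_one, one_div_mul_eq_div] at h
  rw [← h]
  refine setIntegral_congr_fun measurableSet_Ioi fun u hu ↦ ?_
  rw [rpow_neg_one_half_eq_inv_sqrt (le_of_lt hu), div_eq_inv_mul]

theorem exp_neg_sq_div_le_of_mul_le_abs {v₀ d u : ℝ} (hu : 0 < u) (hv₀ : 0 ≤ v₀)
    (hd : v₀ * u ≤ |d|) : exp (-d ^ 2 / (4 * u)) ≤ exp (-(v₀ ^ 2 / 4 * u)) := by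
  have hsq : (v₀ * u) ^ 2 ≤ d ^ 2 := by
    simpa only [sq_abs] using pow_le_pow_left₀ (by positivity) hd 2
  rw [exp_le_exp, div_le_iff₀ (by positivity)]
  nlinarith

theorem abs_heatKernel_mul_exp_mul_le {v₀ v₁ γ d u w : ℝ} (hu : 0 < u) (hv₀ : 0 ≤ v₀)
    (hγ : 0 ≤ γ) (hd : v₀ * u ≤ |d|) (hw : |w| ≤ v₁) :
    |exp (-d ^ 2 / (4 * u)) / (2 * √(π * u)) * (exp (-γ * u) * w)|
      ≤ v₁ / (2 * √π) * (exp (-(v₀ ^ 2 / 4 * u)) / √u) := by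
  have hdamp : exp (-γ * u) ≤ 1 := exp_le_one_iff.2 (by nlinarith)
  rw [abs_mul, abs_mul, abs_of_nonneg (by positivity), abs_of_nonneg (exp_pos _).le]
  calc exp (-d ^ 2 / (4 * u)) / (2 * √(π * u)) * (exp (-γ * u) * |w|)
      ≤ exp (-(v₀ ^ 2 / 4 * u)) / (2 * √(π * u)) * (1 * v₁) := by
        gcongr ?_ / _ * (?_ * ?_)
        exact exp_neg_sq_div_le_of_mul_le_abs hu hv₀ hd
    _ = v₁ / (2 * √π) * (exp (-(v₀ ^ 2 / 4 * u)) / √u) := by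
        rw [sqrt_mul pi_pos.le]
        field_simp

theorem on_front_potential_density_bound_general (v₀ v₁ γ : ℝ) (hv₀ : 0 < v₀) (hγ : 0 ≤ γ)
    (s v : ℝ → ℝ)
    (hs : ∀ τ t : ℝ, 0 ≤ τ → τ ≤ t → |s t - s τ| ≥ v₀ * (t - τ))
    (hv_bdd : ∀ τ : ℝ, |v τ| ≤ v₁) :
    ∀ t : ℝ, 0 ≤ t →
      |∫ τ in (0:ℝ)..t,
          Real.exp (-(s t - s τ) ^ 2 / (4 * (t - τ))) / (2 * Real.sqrt (Real.pi * (t - τ))) *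
            (Real.exp (-γ * (t - τ)) * v τ)|
        ≤ v₁ / v₀ := by
  intro t ht
  have hv₁ : 0 ≤ v₁ := (abs_nonneg _).trans (hv_bdd 0)
  have hb : 0 < v₀ ^ 2 / 4 := by positivity
  calc _ ≤ ∫ u in Ioi 0, v₁ / (2 * √π) * (exp (-(v₀ ^ 2 / 4 * u)) / √u) :=
        abs_intervalIntegral_le_integral_Ioi_of_le_comp_sub ht
          ((integrableOn_exp_neg_mul_div_sqrt hb).const_mul _) (fun u _ ↦ by positivity)
          fun τ hτ ↦ abs_heatKernel_mul_exp_mul_le (sub_pos.2 hτ.2) hv₀.le hγ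
            (hs τ t hτ.1.le hτ.2.le) (hv_bdd τ)
    _ = v₁ / v₀ := by
        have hsqrt : √(v₀ ^ 2 / 4) = v₀ / 2 := by
          rw [show v₀ ^ 2 / 4 = (v₀ / 2) ^ 2 by ring, sqrt_sq (by positivity)]
        rw [integral_const_mul, integral_exp_neg_mul_div_sqrt hb, hsqrt]
        field_simp

theorem on_front_potential_density_bound (v₀ v₁ γ : ℝ) (hv₀ : 0 < v₀) (hγ : 0 ≤ γ)
    (s v : ℝ → ℝ)
    (hs : ∀ τ t : ℝ, 0 ≤ τ → τ ≤ t → |s t - s τ| ≥ v₀ * (t - τ))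
    (hv_cont : Continuous v)
    (hv_bdd : ∀ τ : ℝ, |v τ| ≤ v₁) :
    ∀ t : ℝ, 0 ≤ t →
      |∫ τ in (0:ℝ)..t,
          Real.exp (-(s t - s τ) ^ 2 / (4 * (t - τ))) / (2 * Real.sqrt (Real.pi * (t - τ))) *
            (Real.exp (-γ * (t - τ)) * v τ)|
        ≤ v₁ / v₀ :=
  on_front_potential_density_bound_general v₀ v₁ γ hv₀ hγ s v hs hv_bdd
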